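/- arXiv:1203.0213 — 3 statements merged into one kernel-verified Lean document; each statement's English description precedes it below -/
import Mathlib

section
/- Let K be an algebraically closed field with char K ≠ 2, and let x, y, x', y' ∈ K³ be nonzero vectors with x yᵀ + y xᵀ = λ(x' y'ᵀ + y' x'ᵀ) for some nonzero λ ∈ K, and with x yᵀ + y xᵀ ≠ 0. Then the unordered pair of lines {span x, span y} equals {span x', span y'}. (This is the injectivity of the map φ₂ from the second symmetric product S²P² to the secant variety of the Veronese surface in P⁵.) -/
open Matrix

section Aux

variable {K : Type*} [Field K]

/-- If the kernel of `x ⬝ᵥ ·` is contained in that of `x' ⬝ᵥ ·`, then `x'` is a multiple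
of `x`. -/
private lemma ker_dot_imp {n : ℕ} {x x' : Fin n → K} (hx : x ≠ 0)
    (h : ∀ v, x ⬝ᵥ v = 0 → x' ⬝ᵥ v = 0) : ∃ c : K, x' = c • x := by
  obtain ⟨i, hi⟩ := Function.ne_iff.mp hx
  simp only [Pi.zero_apply] at hi
  refine ⟨x' i / x i, funext fun j => ?_⟩
  have hv := h ((x i • (Pi.single j (1:K) : Fin n → K) -
      x j • (Pi.single i (1:K) : Fin n → K))) (by
    simp [dotProduct_sub, dotProduct_smul, dotProduct_single, smul_eq_mul]
    ring)
  simp [dotProduct_sub, dotProduct_smul, dotProduct_single, smul_eq_mul] at hv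
  simp only [Pi.smul_apply, smul_eq_mul]
  field_simp
  linear_combination hv

private lemma sum_form {n : ℕ} (x y v : Fin n → K) :
    ∑ i, ∑ j, v i * v j * (x i * y j) = (x ⬝ᵥ v) * (y ⬝ᵥ v) := by
  rw [dotProduct, dotProduct, Finset.sum_mul_sum]
  exact Finset.sum_congr rfl fun i _ => Finset.sum_congr rfl fun j _ => by ring

/-- A nonzero `x` with `x wᵀ + w xᵀ = 0` in characteristic ≠ 2 forces `w = 0`. -/
private lemma sym_zero {n : ℕ} (hchar : ringChar K ≠ 2) {x w : Fin n → K} (hx : x ≠ 0)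
    (h : ∀ i j, x i * w j + w i * x j = 0) : w = 0 := by
  have h2 : (2 : K) ≠ 0 := Ring.two_ne_zero hchar
  obtain ⟨i, hi⟩ := Function.ne_iff.mp hx
  simp only [Pi.zero_apply] at hi
  have hii := h i i
  have hwi : w i = 0 := by
    have h0 : 2 * (x i * w i) = 0 := by linear_combination hii
    rcases mul_eq_zero.mp h0 with h' | h'
    · exact absurd h' h2
    · exact (mul_eq_zero.mp h').resolve_left hi
  funext j
  have hij := h i j
  rw [hwi, zero_mul, add_zero] at hij
  exact (mul_eq_zero.mp hij).resolve_left hi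

private lemma span_smul {n : ℕ} {c : K} (hc : c ≠ 0) {a b : Fin n → K} (h : b = c • a) :
    Submodule.span K {a} = Submodule.span K {b} := by
  rw [h]
  exact (Submodule.span_singleton_smul_eq (isUnit_iff_ne_zero.mpr hc) a).symm

end Aux

/-- Injectivity of `φ₂ : S²ℙ² → Sec(v₂(ℙ²)) ⊂ ℙ⁵`: over an algebraically closed field
of characteristic ≠ 2, if `x yᵀ + y xᵀ = λ (x' y'ᵀ + y' x'ᵀ) ≠ 0` with all vectors
nonzero and `λ ≠ 0`, then the unordered pair of lines `{span x, span y}` equals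
`{span x', span y'}`. -/
theorem phi2_injective (K : Type*) [Field K] [IsAlgClosed K] (hchar : ringChar K ≠ 2)
    (x y x' y' : Fin 3 → K) (hx : x ≠ 0) (hy : y ≠ 0) (hx' : x' ≠ 0) (hy' : y' ≠ 0)
    (l : K) (hl : l ≠ 0)
    (heq : vecMulVec x y + vecMulVec y x = l • (vecMulVec x' y' + vecMulVec y' x'))
    (hne : vecMulVec x y + vecMulVec y x ≠ 0) :
    (Submodule.span K {x} = Submodule.span K {x'} ∧
        Submodule.span K {y} = Submodule.span K {y'}) ∨
      (Submodule.span K {x} = Submodule.span K {y'} ∧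
        Submodule.span K {y} = Submodule.span K {x'}) := by
  have h2 : (2 : K) ≠ 0 := Ring.two_ne_zero hchar
  -- entrywise equality
  have hent : ∀ i j, x i * y j + y i * x j = l * (x' i * y' j + y' i * x' j) := by
    intro i j
    have := congrFun (congrFun heq i) j
    simpa [vecMulVec_apply, Matrix.add_apply, Matrix.smul_apply, smul_eq_mul] using this
  -- the quadratic forms agree
  have hquad : ∀ v : Fin 3 → K, (x ⬝ᵥ v) * (y ⬝ᵥ v) = l * ((x' ⬝ᵥ v) * (y' ⬝ᵥ v)) := by
    intro v
    have e2 : ∀ a b : Fin 3 → K,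
        ∑ i, ∑ j, v i * v j * (a i * b j + b i * a j) = 2 * ((a ⬝ᵥ v) * (b ⬝ᵥ v)) := by
      intro a b
      simp only [mul_add, Finset.sum_add_distrib]
      rw [sum_form, sum_form]
      ring
    have e1 : ∑ i, ∑ j, v i * v j * (x i * y j + y i * x j)
        = l * ∑ i, ∑ j, v i * v j * (x' i * y' j + y' i * x' j) := by
      rw [Finset.mul_sum]
      refine Finset.sum_congr rfl fun i _ => ?_
      rw [Finset.mul_sum]
      refine Finset.sum_congr rfl fun j _ => ?_
      rw [hent i j]; ring
    rw [e2, e2] at e1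
    have : 2 * ((x ⬝ᵥ v) * (y ⬝ᵥ v)) = 2 * (l * ((x' ⬝ᵥ v) * (y' ⬝ᵥ v))) := by
      rw [e1]; ring
    exact mul_left_cancel₀ h2 this
  -- kernel of `x ⬝ᵥ ·` is contained in the union of two kernels
  have hub : ∀ v, x ⬝ᵥ v = 0 → (x' ⬝ᵥ v = 0 ∨ y' ⬝ᵥ v = 0) := by
    intro v hv
    have h0 := hquad v
    rw [hv, zero_mul] at h0
    exact mul_eq_zero.mp ((mul_eq_zero.mp h0.symm).resolve_left hl)
  -- hence contained in one of them
  have hsplit : (∀ v, x ⬝ᵥ v = 0 → x' ⬝ᵥ v = 0) ∨ (∀ v, x ⬝ᵥ v = 0 → y' ⬝ᵥ v = 0) := by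
    by_contra hc
    push_neg at hc
    obtain ⟨⟨a, ha0, ha⟩, ⟨b, hb0, hb⟩⟩ := hc
    have ha' : y' ⬝ᵥ a = 0 := (hub a ha0).resolve_left ha
    have hb' : x' ⬝ᵥ b = 0 := (hub b hb0).resolve_right hb
    have hab : x ⬝ᵥ (a + b) = 0 := by rw [dotProduct_add, ha0, hb0, add_zero]
    rcases hub _ hab with h1 | h1 <;> rw [dotProduct_add] at h1
    · rw [hb', add_zero] at h1; exact ha h1
    · rw [ha', zero_add] at h1; exact hb h1
  rcases hsplit with hk | hk
  · -- x' is a multiple of x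
    obtain ⟨c, hc⟩ := ker_dot_imp hx hk
    have hcne : c ≠ 0 := by
      rintro rfl
      rw [zero_smul] at hc
      exact hx' hc
    left
    constructor
    · exact span_smul hcne hc
    · -- y = (l*c) • y'
      rw [hc] at hent
      have hw : ∀ i j, x i * (y - (l * c) • y') j + (y - (l * c) • y') i * x j = 0 := by
        intro i j
        have := hent i j
        simp only [Pi.smul_apply, smul_eq_mul] at this
        simp only [Pi.sub_apply, Pi.smul_apply, smul_eq_mul]
        linear_combination this
      have h0 := sym_zero hchar hx hw
      have hyeq : y = (l * c) • y' := by
        have := sub_eq_zero.mp h0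
        exact this
      exact (span_smul (mul_ne_zero hl hcne) hyeq).symm
  · -- y' is a multiple of x
    obtain ⟨c, hc⟩ := ker_dot_imp hx hk
    have hcne : c ≠ 0 := by
      rintro rfl
      rw [zero_smul] at hc
      exact hy' hc
    right
    constructor
    · exact span_smul hcne hc
    · -- y = (l*c) • x'
      rw [hc] at hent
      have hw : ∀ i j, x i * (y - (l * c) • x') j + (y - (l * c) • x') i * x j = 0 := by
        intro i j
        have := hent i j
        simp only [Pi.smul_apply, smul_eq_mul] at this
        simp only [Pi.sub_apply, Pi.smul_apply, smul_eq_mul]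
        linear_combination this
      have h0 := sym_zero hchar hx hw
      have hyeq : y = (l * c) • x' := sub_eq_zero.mp h0
      exact (span_smul (mul_ne_zero hl hcne) hyeq).symm
end

section
/- Let K be a field with char K ≠ 2 and let x, y ∈ K³ be linearly independent. Then the intersection of the linear subspaces T_x = {x zᵀ + z xᵀ : z ∈ K³} and T_y = {y wᵀ + w yᵀ : w ∈ K³} of Sym²(K³) is exactly the line spanned by x yᵀ + y xᵀ. (Projectively: two distinct tangent planes to the Veronese surface v₂(P²) ⊂ P⁵ meet in exactly one point, namely φ₂(x+y); in particular any two tangent planes of the Veronese surface intersect.) -/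
open Matrix

private lemma vecMulVec_mulVec' {K : Type*} [CommRing K] (a b v : Fin 3 → K) :
    vecMulVec a b *ᵥ v = (b ⬝ᵥ v) • a := by
  funext i
  simp [vecMulVec, mulVec, dotProduct, Finset.sum_mul, Finset.mul_sum, mul_comm, mul_left_comm]

private lemma vecMulVec_smul_left {K : Type*} [CommRing K] (c : K) (a b : Fin 3 → K) :
    vecMulVec a (c • b) = c • vecMulVec a b := by
  funext i j
  simp [vecMulVec, mul_comm, mul_left_comm]

private lemma vecMulVec_smul_right {K : Type*} [CommRing K] (c : K) (a b : Fin 3 → K) :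
    vecMulVec (c • a) b = c • vecMulVec a b := by
  funext i j
  simp [vecMulVec, mul_comm, mul_left_comm]

private lemma dot_single_rep {K : Type*} [CommRing K] (f : (Fin 3 → K) →ₗ[K] K)
    (v : Fin 3 → K) : v ⬝ᵥ (fun j => f (Pi.single j 1)) = f v := by
  rw [LinearMap.pi_apply_eq_sum_univ f v]
  simp only [dotProduct, smul_eq_mul]
  refine Finset.sum_congr rfl fun i _ => ?_
  have h : (fun j => if i = j then (1:K) else 0) = Pi.single i 1 := by
    funext j; simp [Pi.single_apply, eq_comm]
  rw [h]

private lemma exists_dual_unit {K : Type*} [Field K] (x y : Fin 3 → K)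
    (hxy : LinearIndependent K ![x, y]) :
    ∃ f : (Fin 3 → K) →ₗ[K] K, f x = 1 ∧ f y = 0 := by
  have hx : x ∉ Submodule.span K {y} := by
    intro hx
    obtain ⟨c, rfl⟩ := Submodule.mem_span_singleton.mp hx
    have := (LinearIndependent.pair_iff.mp hxy) 1 (-c) (by simp)
    simp at this
  obtain ⟨f, hf, hmap⟩ :=
    (Submodule.span K {y}).exists_dual_map_eq_bot_of_notMem hx inferInstance
  refine ⟨(f x)⁻¹ • f, by simp [inv_mul_cancel₀ hf], ?_⟩
  have hy : f y = 0 := by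
    have : f y ∈ Submodule.map f (Submodule.span K {y}) :=
      ⟨y, Submodule.mem_span_singleton_self y, rfl⟩
    rwa [hmap, Submodule.mem_bot] at this
  simp [hy]

/-- For linearly independent `x, y ∈ K³` (with `char K ≠ 2`), the affine cones
`T_x = {x zᵀ + z xᵀ}` and `T_y = {y wᵀ + w yᵀ}` over the embedded tangent planes to the
Veronese surface at `v₂([x])`, `v₂([y])` intersect exactly in the line spanned by
`x yᵀ + y xᵀ` (projectively: two distinct tangent planes of `v₂(ℙ²) ⊂ ℙ⁵` meet in
exactly one point, namely `φ₂(x + y)`). -/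
theorem veronese_tangent_planes_meet (K : Type*) [Field K] (hchar : ringChar K ≠ 2)
    (x y : Fin 3 → K) (hxy : LinearIndependent K ![x, y]) :
    {M : Matrix (Fin 3) (Fin 3) K | ∃ z : Fin 3 → K, M = vecMulVec x z + vecMulVec z x} ∩
        {M | ∃ w : Fin 3 → K, M = vecMulVec y w + vecMulVec w y} =
      (Submodule.span K {vecMulVec x y + vecMulVec y x} :
        Set (Matrix (Fin 3) (Fin 3) K)) := by
  have h2 : (2 : K) ≠ 0 := Ring.two_ne_zero hchar
  obtain ⟨f, hfx, hfy⟩ := exists_dual_unit x y hxy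
  have hxy' : LinearIndependent K ![y, x] := by
    have := hxy
    rw [LinearIndependent.pair_iff] at this ⊢
    intro s t hst
    have := this t s (by rw [add_comm]; exact hst)
    exact ⟨this.2, this.1⟩
  obtain ⟨g, hgy, hgx⟩ := exists_dual_unit y x hxy'
  set p : Fin 3 → K := fun j => f (Pi.single j 1) with hp
  set q : Fin 3 → K := fun j => g (Pi.single j 1) with hq
  have hdp : ∀ v : Fin 3 → K, v ⬝ᵥ p = f v := fun v => dot_single_rep f v
  have hdq : ∀ v : Fin 3 → K, v ⬝ᵥ q = g v := fun v => dot_single_rep g v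
  ext M
  constructor
  · rintro ⟨⟨z, rfl⟩, ⟨w, hw⟩⟩
    -- contract with p
    have h1 : (f z) • x + z = (f w) • y := by
      have := congrArg (· *ᵥ p) hw
      simpa [Matrix.add_mulVec, vecMulVec_mulVec', hdp, hfx, hfy] using this
    have h2' : (g z) • x = (g w) • y + w := by
      have := congrArg (· *ᵥ q) hw
      simpa [Matrix.add_mulVec, vecMulVec_mulVec', hdq, hgx, hgy] using this
    have hfz : f z = 0 := by
      have := congrArg f h1
      simp [map_add, _root_.map_smul, hfx, hfy, smul_eq_mul] at this
      have h2fz : 2 * f z = 0 := by rw [two_mul]; linear_combination this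
      exact (mul_eq_zero.mp h2fz).resolve_left h2
    have hgw : g w = 0 := by
      have := congrArg g h2'
      simp [map_add, _root_.map_smul, hgx, hgy, smul_eq_mul] at this
      have h2gw : 2 * g w = 0 := by rw [two_mul]; linear_combination -this
      exact (mul_eq_zero.mp h2gw).resolve_left h2
    have hz : z = (f w) • y := by rw [hfz, zero_smul, zero_add] at h1; exact h1
    have hw' : w = (g z) • x := by rw [hgw, zero_smul, zero_add] at h2'; exact h2'.symm
    refine Submodule.mem_span_singleton.mpr ⟨f w, ?_⟩
    rw [hz, vecMulVec_smul_left, vecMulVec_smul_right, ← smul_add]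
  · intro hM
    obtain ⟨c, rfl⟩ := Submodule.mem_span_singleton.mp hM
    constructor
    · exact ⟨c • y, by rw [vecMulVec_smul_left, vecMulVec_smul_right, ← smul_add]⟩
    · refine ⟨c • x, ?_⟩
      rw [vecMulVec_smul_left, vecMulVec_smul_right, ← smul_add]
      rw [smul_add, smul_add]
      abel_nf
end

section
/- Let K be an algebraically closed field with char K ≠ 2. The map sending an unordered pair of distinct points {p, q} of the twisted cubic C ⊂ P³ (parametrized by [s:t] ↦ [s³:s²t:st²:t³]) to the Plücker point [p ∧ q] ∈ P(Λ²K⁴) extends to the full symmetric square S²P¹, and its image is projectively equivalent to the Veronese surface v₂(P²): concretely, the Plücker coordinates of the secant line through the points with parameters [s₀:t₀], [s₁:t₁] are given by homogeneous forms of bidegree (2,2) symmetric in the two parameters, which are quadratic in the elementary symmetric functions (s₀s₁, s₀t₁+s₁t₀, t₀t₁). -/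
open MvPolynomial


open MvPolynomial in
private lemma cons_val_five' {α : Type*} (a b c d e f : α) :
    (![a, b, c, d, e, f] : Fin 6 → α) 5 = f := rfl

open MvPolynomial in
private noncomputable def secQ (K : Type*) [Field K] : Fin 6 → MvPolynomial (Fin 3) K :=
  ![X 0 ^ 2, X 0 * X 1, X 1 ^ 2 - X 0 * X 2, X 0 * X 2, X 1 * X 2, X 2 ^ 2]

open MvPolynomial in
private lemma secQ_homog (K : Type*) [Field K] : ∀ k, (secQ K k).IsHomogeneous 2 := by
  intro k
  fin_cases k <;> simp only [secQ, Matrix.cons_val_zero, Matrix.cons_val_one, Matrix.head_cons,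
    Matrix.cons_val_two, Matrix.tail_cons, Matrix.cons_val_three, Matrix.cons_val_four,
    cons_val_five']
  · exact (isHomogeneous_X _ _).pow 2
  · exact (isHomogeneous_X _ _).mul (isHomogeneous_X _ _)
  · exact ((isHomogeneous_X _ _).pow 2).sub ((isHomogeneous_X _ _).mul (isHomogeneous_X _ _))
  · exact (isHomogeneous_X _ _).mul (isHomogeneous_X _ _)
  · exact (isHomogeneous_X _ _).mul (isHomogeneous_X _ _)
  · exact (isHomogeneous_X _ _).pow 2

open MvPolynomial in
set_option maxHeartbeats 1000000 in
private lemma secQ_li (K : Type*) [Field K] : LinearIndependent K (secQ K) := by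
  rw [Fintype.linearIndependent_iff]
  intro g h
  have hc : ∀ m : Fin 3 →₀ ℕ, coeff m (∑ i, g i • secQ K i) = 0 := by
    intro m; rw [h]; simp
  have e0 := hc (Finsupp.single 0 2)
  have e1 := hc (Finsupp.single 0 1 + Finsupp.single 1 1)
  have e2 := hc (Finsupp.single 1 2)
  have e3 := hc (Finsupp.single 0 1 + Finsupp.single 2 1)
  have e4 := hc (Finsupp.single 1 1 + Finsupp.single 2 1)
  have e5 := hc (Finsupp.single 2 2)
  simp [secQ, Fin.sum_univ_six, X, monomial_mul, monomial_pow, one_pow, coeff_monomial,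
    Matrix.cons_val_succ, Matrix.cons_val_zero, cons_val_five', Finsupp.ext_iff,
    Finsupp.add_apply, Finsupp.smul_apply, Finsupp.single_apply,
    Fin.forall_fin_succ] at e0 e1 e2 e3 e4 e5
  intro i
  fin_cases i <;> simp_all <;> linarith

/-- The secant lines of the twisted cubic form a Veronese surface in the Plücker
quadric `G(1,3) ⊂ ℙ(Λ²K⁴)`: writing `(u : v : w) = (s₀s₁ : s₀t₁+s₁t₀ : t₀t₁)` for the
point of `S²ℙ¹ ≅ ℙ²` determined by the parameters `[s₀:t₀], [s₁:t₁]` of the two points,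
each of the six Plücker coordinates `p_ij` of the secant line equals the antisymmetric
factor `(s₀t₁ − s₁t₀)` times a quadratic form in `(u, v, w)`, and these six quadratic
forms are linearly independent (so the secant map is, up to coordinates, the 2-Veronese
embedding `v₂(ℙ²) ⊂ ℙ⁵`). -/
theorem secants_of_twisted_cubic_veronese (K : Type*) [Field K] [IsAlgClosed K]
    (hchar : ringChar K ≠ 2) :
    ∃ Q : Fin 6 → MvPolynomial (Fin 3) K,
      (∀ k, (Q k).IsHomogeneous 2) ∧ LinearIndependent K Q ∧
      ∀ s₀ t₀ s₁ t₁ : K, ∀ k : Fin 6,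
        (![s₀ ^ 3, s₀ ^ 2 * t₀, s₀ * t₀ ^ 2, t₀ ^ 3]
              ((![(0, 1), (0, 2), (0, 3), (1, 2), (1, 3), (2, 3)] :
                  Fin 6 → Fin 4 × Fin 4) k).1 *
            ![s₁ ^ 3, s₁ ^ 2 * t₁, s₁ * t₁ ^ 2, t₁ ^ 3]
              ((![(0, 1), (0, 2), (0, 3), (1, 2), (1, 3), (2, 3)] :
                  Fin 6 → Fin 4 × Fin 4) k).2 -
          ![s₀ ^ 3, s₀ ^ 2 * t₀, s₀ * t₀ ^ 2, t₀ ^ 3]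
              ((![(0, 1), (0, 2), (0, 3), (1, 2), (1, 3), (2, 3)] :
                  Fin 6 → Fin 4 × Fin 4) k).2 *
            ![s₁ ^ 3, s₁ ^ 2 * t₁, s₁ * t₁ ^ 2, t₁ ^ 3]
              ((![(0, 1), (0, 2), (0, 3), (1, 2), (1, 3), (2, 3)] :
                  Fin 6 → Fin 4 × Fin 4) k).1) =
        (s₀ * t₁ - s₁ * t₀) *
          MvPolynomial.eval ![s₀ * s₁, s₀ * t₁ + s₁ * t₀, t₀ * t₁] (Q k) := by
  refine ⟨secQ K, secQ_homog K, secQ_li K, ?_⟩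
  intro s₀ t₀ s₁ t₁ k
  fin_cases k <;>
    simp [secQ, eval_X, Matrix.cons_val_zero, Matrix.cons_val_one, Matrix.head_cons,
      Matrix.cons_val_two, Matrix.tail_cons, Matrix.cons_val_three, Matrix.cons_val_four,
      cons_val_five'] <;> ring
end
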